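/- If two symmetric bba's m_a = (a, a, 1-2a) and m_b = (b, b, 1-2b) on {θ1, θ2} are combined by Dempster's rule, the combined bba remains symmetric and its pignistic entropy equals log 2; hence the pignistic-entropy criterion cannot distinguish any two symmetric track hypotheses. -/

import Mathlib

/-- Dempster conflict factor between two bba's on {θ1, θ2}. -/
def conflict (m1 m2 : ℝ × ℝ × ℝ) : ℝ := m1.1 * m2.2.1 + m1.2.1 * m2.1

/-- Dempster's rule of combination on {θ1, θ2}. -/
noncomputable def dempster (m1 m2 : ℝ × ℝ × ℝ) : ℝ × ℝ × ℝ :=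
  ((m1.1 * m2.1 + m1.1 * m2.2.2 + m1.2.2 * m2.1) / (1 - conflict m1 m2),
   (m1.2.1 * m2.2.1 + m1.2.1 * m2.2.2 + m1.2.2 * m2.2.1) / (1 - conflict m1 m2),
   (m1.2.2 * m2.2.2) / (1 - conflict m1 m2))

/-- Pignistic entropy of a bba (x, y, u) on {θ1, θ2}. -/
noncomputable def HbetP (m : ℝ × ℝ × ℝ) : ℝ :=
  -((m.1 + m.2.2 / 2) * Real.log (m.1 + m.2.2 / 2))
    - (m.2.1 + m.2.2 / 2) * Real.log (m.2.1 + m.2.2 / 2)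

/-! The Dempster combination of two bba's with equal masses on θ1 and θ2 again has equal masses
on θ1 and θ2, and it is normalized as long as the conflict is not total. A normalized bba with
equal singleton masses has the uniform pignistic probability, whose entropy is `log 2`. -/

theorem dempster_fst_eq_snd (a u b v : ℝ) :
    (dempster (a, a, u) (b, b, v)).1 = (dempster (a, a, u) (b, b, v)).2.1 := rfl

theorem dempster_mass_sum {m1 m2 : ℝ × ℝ × ℝ} (h1 : m1.1 + m1.2.1 + m1.2.2 = 1)
    (h2 : m2.1 + m2.2.1 + m2.2.2 = 1) (hk : conflict m1 m2 ≠ 1) :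
    (dempster m1 m2).1 + (dempster m1 m2).2.1 + (dempster m1 m2).2.2 = 1 := by
  have hk' : 1 - conflict m1 m2 ≠ 0 := sub_ne_zero.mpr hk.symm
  simp only [dempster]
  rw [← add_div, ← add_div, div_eq_one_iff_eq hk', conflict]
  linear_combination (m2.1 + m2.2.1 + m2.2.2) * h1 + h2

theorem HbetP_eq_log_two_of_fst_eq_snd {m : ℝ × ℝ × ℝ} (hsymm : m.1 = m.2.1)
    (hsum : m.1 + m.2.1 + m.2.2 = 1) : HbetP m = Real.log 2 := by
  have hbetP₁ : m.1 + m.2.2 / 2 = 2⁻¹ := by linear_combination hsum / 2 + hsymm / 2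
  have hbetP₂ : m.2.1 + m.2.2 / 2 = 2⁻¹ := by linear_combination hsum / 2 - hsymm / 2
  rw [HbetP, hbetP₁, hbetP₂, Real.log_inv]
  ring

theorem stmt17_general (a b : ℝ)
    (hk : 2 * a * b < 1) :
    (dempster (a, a, 1 - 2*a) (b, b, 1 - 2*b)).1
      = (dempster (a, a, 1 - 2*a) (b, b, 1 - 2*b)).2.1 ∧
    HbetP (dempster (a, a, 1 - 2*a) (b, b, 1 - 2*b)) = Real.log 2 := by
  have hsymm := dempster_fst_eq_snd a (1 - 2*a) b (1 - 2*b)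
  have hconflict : conflict (a, a, 1 - 2*a) (b, b, 1 - 2*b) ≠ 1 := by
    rw [conflict]
    linarith
  have hsum := dempster_mass_sum (by ring) (by ring) hconflict
  exact ⟨hsymm, HbetP_eq_log_two_of_fst_eq_snd hsymm hsum⟩

theorem stmt17 (a b : ℝ) (ha : 0 ≤ a) (ha' : a ≤ 1/2) (hb : 0 ≤ b) (hb' : b ≤ 1/2)
    (hk : 2 * a * b < 1) :
    (dempster (a, a, 1 - 2*a) (b, b, 1 - 2*b)).1
      = (dempster (a, a, 1 - 2*a) (b, b, 1 - 2*b)).2.1 ∧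
    HbetP (dempster (a, a, 1 - 2*a) (b, b, 1 - 2*b)) = Real.log 2 :=
  stmt17_general a b hk
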